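/- Let b ∈ (0,∞) and let ψ : [0,b] → ℝ be continuously differentiable with a non-increasing derivative ψ'. Then for all h ∈ (0,b]: ∫_0^b ( ψ(s) − ψ(⌊s⌋_h) ) ds ≤ (1/2)·[ ψ'(0)·h² + ( ψ(⌊b⌋_h − h) − ψ(0) )·h + ψ'(⌊b⌋_h)·( b − ⌊b⌋_h )² ], where ⌊s⌋_h := max{ kh : k ∈ ℕ₀, kh ≤ s } is the largest grid point of the grid {0, h, 2h, …} not exceeding s (note ⌊b⌋_h ≥ h since h ≤ b, so ⌊b⌋_h − h ∈ [0,b]). -/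
import Mathlib


/-- For `h ∈ (0,∞)` and `t ∈ [0,∞)`, `⌊t⌋_h = max { s ∈ {0, h, 2h, …} : s ≤ t } = h·⌊t/h⌋`
is the largest grid point of the grid `{0, h, 2h, …}` not exceeding `t`. -/
noncomputable def gridFloor (h t : ℝ) : ℝ := h * ⌊t / h⌋₊

lemma nicf_ftc (b : ℝ) (ψ ψ' : ℝ → ℝ)
    (hderiv : ∀ x ∈ Set.Icc 0 b, HasDerivAt ψ (ψ' x) x)
    (hcont : ContinuousOn ψ' (Set.Icc 0 b))
    {a c : ℝ} (h0 : 0 ≤ a) (hac : a ≤ c) (hcb : c ≤ b) :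
    ∫ u in a..c, ψ' u = ψ c - ψ a := by
  have hsub : Set.uIcc a c ⊆ Set.Icc 0 b := by
    rw [Set.uIcc_of_le hac]; exact Set.Icc_subset_Icc h0 hcb
  exact intervalIntegral.integral_eq_sub_of_hasDerivAt (fun x hx => hderiv x (hsub hx))
    (hcont.mono hsub).intervalIntegrable

lemma nicf_step_lower (b : ℝ) (ψ ψ' : ℝ → ℝ)
    (hderiv : ∀ x ∈ Set.Icc 0 b, HasDerivAt ψ (ψ' x) x)
    (hcont : ContinuousOn ψ' (Set.Icc 0 b))
    (hanti : AntitoneOn ψ' (Set.Icc 0 b))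
    {a c : ℝ} (h0 : 0 ≤ a) (hac : a ≤ c) (hcb : c ≤ b) :
    ψ' c * (c - a) ≤ ψ c - ψ a := by
  have hsub : Set.uIcc a c ⊆ Set.Icc 0 b := by
    rw [Set.uIcc_of_le hac]; exact Set.Icc_subset_Icc h0 hcb
  rw [← nicf_ftc b ψ ψ' hderiv hcont h0 hac hcb]
  have : ∫ u in a..c, ψ' c ≤ ∫ u in a..c, ψ' u := by
    apply intervalIntegral.integral_mono_on hac intervalIntegrable_const
      (hcont.mono hsub).intervalIntegrable
    intro u hu
    exact hanti (hsub (Set.mem_uIcc_of_le hu.1 hu.2)) ⟨h0.trans hac, hcb⟩ hu.2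
  simpa [intervalIntegral.integral_const, smul_eq_mul, mul_comm] using this

lemma nicf_step_upper (b : ℝ) (ψ ψ' : ℝ → ℝ)
    (hderiv : ∀ x ∈ Set.Icc 0 b, HasDerivAt ψ (ψ' x) x)
    (hcont : ContinuousOn ψ' (Set.Icc 0 b))
    (hanti : AntitoneOn ψ' (Set.Icc 0 b))
    {a c : ℝ} (h0 : 0 ≤ a) (hac : a ≤ c) (hcb : c ≤ b) :
    ∫ s in a..c, (ψ s - ψ a) ≤ ψ' a * (c - a) ^ 2 / 2 := by
  have hψcont : ContinuousOn ψ (Set.Icc 0 b) := fun x hx =>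
    (hderiv x hx).continuousAt.continuousWithinAt
  have hsub : Set.uIcc a c ⊆ Set.Icc 0 b := by
    rw [Set.uIcc_of_le hac]; exact Set.Icc_subset_Icc h0 hcb
  have hkey : ∀ s ∈ Set.Icc a c, ψ s - ψ a ≤ ψ' a * (s - a) := by
    intro s hs
    have hsb : s ≤ b := hs.2.trans hcb
    rw [← nicf_ftc b ψ ψ' hderiv hcont h0 hs.1 hsb]
    have hsub2 : Set.uIcc a s ⊆ Set.Icc 0 b := by
      rw [Set.uIcc_of_le hs.1]; exact Set.Icc_subset_Icc h0 hsb
    have : ∫ u in a..s, ψ' u ≤ ∫ u in a..s, ψ' a := by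
      apply intervalIntegral.integral_mono_on hs.1 (hcont.mono hsub2).intervalIntegrable
        intervalIntegrable_const
      intro u hu
      exact hanti ⟨h0, hac.trans hcb⟩ (hsub2 (Set.mem_uIcc_of_le hu.1 hu.2)) hu.1
    simpa [intervalIntegral.integral_const, smul_eq_mul, mul_comm] using this
  calc ∫ s in a..c, (ψ s - ψ a)
      ≤ ∫ s in a..c, ψ' a * (s - a) := by
        apply intervalIntegral.integral_mono_on hac
          (((hψcont.mono hsub).sub continuousOn_const).intervalIntegrable)
          (Continuous.intervalIntegrable (by continuity) _ _) hkey
    _ = ψ' a * (c - a) ^ 2 / 2 := by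
        rw [intervalIntegral.integral_const_mul]
        have : ∫ s in a..c, (s - a) = (c - a) ^ 2 / 2 := by
          rw [intervalIntegral.integral_sub intervalIntegral.intervalIntegrable_id
            intervalIntegrable_const, integral_id, intervalIntegral.integral_const, smul_eq_mul]
          ring
        rw [this]; ring

lemma nicf_grid (h : ℝ) (hh : 0 < h) (k : ℕ) {s : ℝ} (h1 : (k : ℝ) * h ≤ s)
    (h2 : s < ((k : ℝ) + 1) * h) : gridFloor h s = (k : ℝ) * h := by
  have hs0 : (0:ℝ) ≤ s := le_trans (by positivity) h1
  have hfl : ⌊s / h⌋₊ = k := by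
    rw [Nat.floor_eq_iff (by positivity)]
    constructor
    · rw [le_div_iff₀ hh]; linarith
    · rw [div_lt_iff₀ hh]; push_cast; linarith
  unfold gridFloor; rw [hfl]; ring

open MeasureTheory in
/-- numerical integration of concave functions: let `b ∈ (0,∞)` and let
`ψ : [0,b] → ℝ` be continuously differentiable with a non-increasing derivative `ψ'`.
Then for all `h ∈ (0,b]`:
`∫_0^b (ψ(s) − ψ(⌊s⌋_h)) ds
  ≤ (1/2)·(ψ'(0)·h² + (ψ(⌊b⌋_h − h) − ψ(0))·h + ψ'(⌊b⌋_h)·(b − ⌊b⌋_h)²)`. -/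
theorem numerical_integration_of_concave_functions
    (b : ℝ) (hb : 0 < b) (ψ ψ' : ℝ → ℝ)
    (hderiv : ∀ x ∈ Set.Icc 0 b, HasDerivAt ψ (ψ' x) x)
    (hcont : ContinuousOn ψ' (Set.Icc 0 b))
    (hanti : AntitoneOn ψ' (Set.Icc 0 b)) :
    ∀ h ∈ Set.Ioc 0 b,
      (∫ s in (0:ℝ)..b, (ψ s - ψ (gridFloor h s))) ≤
        (1 / 2) * (ψ' 0 * h ^ 2 + (ψ (gridFloor h b - h) - ψ 0) * h +
          ψ' (gridFloor h b) * (b - gridFloor h b) ^ 2) := by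
  rintro h ⟨hh0, hhb⟩
  have hψcont : ContinuousOn ψ (Set.Icc 0 b) := fun x hx =>
    (hderiv x hx).continuousAt.continuousWithinAt
  set F : ℝ → ℝ := fun s => ψ s - ψ (gridFloor h s) with hF
  set n : ℕ := ⌊b / h⌋₊ with hn
  have hn1 : 1 ≤ n := Nat.le_floor (by rw [Nat.cast_one]; exact (one_le_div hh0).2 hhb)
  have hbn : (n : ℝ) * h ≤ b := by
    have h1 : (n : ℝ) ≤ b / h := Nat.floor_le (by positivity)
    calc (n : ℝ) * h ≤ (b / h) * h := mul_le_mul_of_nonneg_right h1 hh0.le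
      _ = b := div_mul_cancel₀ b hh0.ne'
  have hbn' : b < ((n : ℝ) + 1) * h := by
    have h1 : b / h < (n : ℝ) + 1 := Nat.lt_floor_add_one (b / h)
    calc b = (b / h) * h := (div_mul_cancel₀ b hh0.ne').symm
      _ < ((n : ℝ) + 1) * h := mul_lt_mul_of_pos_right h1 hh0
  have hgb : gridFloor h b = (n : ℝ) * h := by unfold gridFloor; rw [← hn]; ring
  -- a.e. identification on each grid cell
  have hae : ∀ k : ℕ, ∀ᵐ x ∂(volume : Measure ℝ),
      x ∈ Set.uIoc ((k : ℝ) * h) (((k : ℝ) + 1) * h) → F x = ψ x - ψ ((k : ℝ) * h) := by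
    intro k
    have hne : ∀ᵐ x ∂(volume : Measure ℝ), x ≠ ((k : ℝ) + 1) * h := by
      rw [MeasureTheory.ae_iff]
      simpa using (Real.volume_singleton (a := ((k : ℝ) + 1) * h))
    filter_upwards [hne] with x hx hmem
    rw [Set.uIoc_of_le (by nlinarith)] at hmem
    have hg : gridFloor h x = (k : ℝ) * h :=
      nicf_grid h hh0 k hmem.1.le (lt_of_le_of_ne hmem.2 hx)
    simp only [hF, hg]
  -- integrability on each grid cell contained in [0, b]
  have hintpc : ∀ k : ℕ, ((k : ℝ) + 1) * h ≤ b →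
      IntervalIntegrable F volume ((k : ℝ) * h) (((k : ℝ) + 1) * h) := by
    intro k hkb
    have hbase : IntervalIntegrable (fun s => ψ s - ψ ((k : ℝ) * h)) volume
        ((k : ℝ) * h) (((k : ℝ) + 1) * h) := by
      apply ContinuousOn.intervalIntegrable
      apply ContinuousOn.sub ?_ continuousOn_const
      apply hψcont.mono
      rw [Set.uIcc_of_le (by nlinarith)]
      exact Set.Icc_subset_Icc (by positivity) hkb
    rw [intervalIntegrable_iff] at hbase ⊢
    exact hbase.congr ((MeasureTheory.ae_restrict_iff' measurableSet_uIoc).2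
      ((hae k).mono fun x hx hmem => (hx hmem).symm))
  have hcast : ∀ k : ℕ, (((k + 1 : ℕ) : ℝ)) * h = ((k : ℝ) + 1) * h := by
    intro k; push_cast; ring
  -- piecewise integrability for the adjacent-interval lemmas
  have hintk : ∀ k < n, IntervalIntegrable F volume (((k : ℕ) : ℝ) * h) (((k + 1 : ℕ) : ℝ) * h) := by
    intro k hk
    rw [hcast k]
    apply hintpc
    have : ((k : ℝ) + 1) ≤ (n : ℝ) := by exact_mod_cast Nat.succ_le_of_lt hk
    calc ((k : ℝ) + 1) * h ≤ (n : ℝ) * h := mul_le_mul_of_nonneg_right this hh0.le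
      _ ≤ b := hbn
  have hint0n : IntervalIntegrable F volume 0 ((n : ℝ) * h) := by
    have := IntervalIntegrable.trans_iterate (a := fun k : ℕ => (k : ℝ) * h)
      (f := F) (μ := volume) (n := n) hintk
    simpa using this
  -- on [n h, b] the function F agrees with s ↦ ψ s - ψ (n h) everywhere
  have heqlast : Set.EqOn F (fun s => ψ s - ψ ((n : ℝ) * h)) (Set.uIcc ((n : ℝ) * h) b) := by
    intro x hx
    rw [Set.uIcc_of_le hbn] at hx
    have hg : gridFloor h x = (n : ℝ) * h :=
      nicf_grid h hh0 n hx.1 (lt_of_le_of_lt hx.2 hbn')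
    simp only [hF, hg]
  have hintlast : IntervalIntegrable F volume ((n : ℝ) * h) b := by
    apply ContinuousOn.intervalIntegrable
    apply ContinuousOn.congr ?_ heqlast
    apply ContinuousOn.sub ?_ continuousOn_const
    apply hψcont.mono
    rw [Set.uIcc_of_le hbn]
    exact Set.Icc_subset_Icc (by positivity) le_rfl
  -- decomposition of the integral
  have hsplit : ∫ s in (0:ℝ)..b, F s =
      (∫ s in (0:ℝ)..((n : ℝ) * h), F s) + ∫ s in ((n : ℝ) * h)..b, F s :=
    (intervalIntegral.integral_add_adjacent_intervals hint0n hintlast).symm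
  have hsum : ∑ k ∈ Finset.range n, ∫ s in (((k : ℕ) : ℝ) * h)..(((k + 1 : ℕ) : ℝ) * h), F s
      = ∫ s in (0:ℝ)..((n : ℝ) * h), F s := by
    have := intervalIntegral.sum_integral_adjacent_intervals (a := fun k : ℕ => (k : ℝ) * h)
      (f := F) (μ := volume) (n := n) hintk
    simpa using this
  -- bound each cell integral
  have hcellb : ∀ k ∈ Finset.range n,
      (∫ s in (((k : ℕ) : ℝ) * h)..(((k + 1 : ℕ) : ℝ) * h), F s) ≤ ψ' ((k : ℝ) * h) * h ^ 2 / 2 := by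
    intro k hk
    rw [hcast k]
    have hkb : ((k : ℝ) + 1) * h ≤ b := by
      have : ((k : ℝ) + 1) ≤ (n : ℝ) := by exact_mod_cast Nat.succ_le_of_lt (Finset.mem_range.1 hk)
      calc ((k : ℝ) + 1) * h ≤ (n : ℝ) * h := mul_le_mul_of_nonneg_right this hh0.le
        _ ≤ b := hbn
    have heq : (∫ s in ((k : ℝ) * h)..(((k : ℝ) + 1) * h), F s)
        = ∫ s in ((k : ℝ) * h)..(((k : ℝ) + 1) * h), (ψ s - ψ ((k : ℝ) * h)) :=
      intervalIntegral.integral_congr_ae (hae k)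
    rw [heq]
    have := nicf_step_upper b ψ ψ' hderiv hcont hanti
      (a := (k : ℝ) * h) (c := ((k : ℝ) + 1) * h) (by positivity) (by nlinarith) hkb
    rwa [show ((k : ℝ) + 1) * h - (k : ℝ) * h = h by ring] at this
  have hsumb : (∫ s in (0:ℝ)..((n : ℝ) * h), F s)
      ≤ ∑ k ∈ Finset.range n, ψ' ((k : ℝ) * h) * h ^ 2 / 2 := by
    rw [← hsum]; exact Finset.sum_le_sum hcellb
  -- bound the last piece
  have hlastb : (∫ s in ((n : ℝ) * h)..b, F s) ≤ ψ' ((n : ℝ) * h) * (b - (n : ℝ) * h) ^ 2 / 2 := by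
    rw [intervalIntegral.integral_congr heqlast]
    exact nicf_step_upper b ψ ψ' hderiv hcont hanti (by positivity) hbn le_rfl
  -- telescope the sum
  obtain ⟨m, hm⟩ : ∃ m, n = m + 1 := ⟨n - 1, (Nat.succ_pred_eq_of_pos hn1).symm⟩
  have htel : ∑ k ∈ Finset.range n, ψ' ((k : ℝ) * h) * h ^ 2 / 2
      ≤ ψ' 0 * h ^ 2 / 2 + (ψ ((m : ℝ) * h) - ψ 0) * h / 2 := by
    rw [hm, Finset.sum_range_succ']
    have hterm : ∀ k ∈ Finset.range m,
        ψ' (((k + 1 : ℕ) : ℝ) * h) * h ^ 2 / 2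
          ≤ (ψ (((k + 1 : ℕ) : ℝ) * h) - ψ (((k : ℕ) : ℝ) * h)) * (h / 2) := by
      intro k hk
      have hkb : ((k : ℝ) + 1) * h ≤ b := by
        have h1 : ((k : ℝ) + 1) ≤ (n : ℝ) := by
          have hkm := Finset.mem_range.1 hk
          have : k + 1 ≤ n := by omega
          exact_mod_cast this
        calc ((k : ℝ) + 1) * h ≤ (n : ℝ) * h := mul_le_mul_of_nonneg_right h1 hh0.le
          _ ≤ b := hbn
      have hlow := nicf_step_lower b ψ ψ' hderiv hcont hanti
        (a := (k : ℝ) * h) (c := ((k : ℝ) + 1) * h) (by positivity) (by nlinarith) hkb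
      rw [show ((k : ℝ) + 1) * h - (k : ℝ) * h = h by ring] at hlow
      rw [hcast k]
      nlinarith [hh0.le]
    have htele : ∑ k ∈ Finset.range m,
        (ψ (((k + 1 : ℕ) : ℝ) * h) - ψ (((k : ℕ) : ℝ) * h))
        = ψ ((m : ℝ) * h) - ψ 0 := by
      have := Finset.sum_range_sub (f := fun k : ℕ => ψ ((k : ℝ) * h)) m
      simpa using this
    have h1 : ∑ k ∈ Finset.range m, ψ' (((k + 1 : ℕ) : ℝ) * h) * h ^ 2 / 2
        ≤ (ψ ((m : ℝ) * h) - ψ 0) * (h / 2) := by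
      calc ∑ k ∈ Finset.range m, ψ' (((k + 1 : ℕ) : ℝ) * h) * h ^ 2 / 2
          ≤ ∑ k ∈ Finset.range m,
              (ψ (((k + 1 : ℕ) : ℝ) * h) - ψ (((k : ℕ) : ℝ) * h)) * (h / 2) :=
            Finset.sum_le_sum hterm
        _ = (ψ ((m : ℝ) * h) - ψ 0) * (h / 2) := by rw [← Finset.sum_mul, htele]
    have h0 : ψ' (((0 : ℕ) : ℝ) * h) * h ^ 2 / 2 = ψ' 0 * h ^ 2 / 2 := by norm_num
    linarith [h1, h0.le]
  -- combine
  rw [hgb]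
  have hmh : (n : ℝ) * h - h = (m : ℝ) * h := by rw [hm]; push_cast; ring
  rw [hmh]
  have := hsplit
  simp only [hF] at this hsumb hlastb ⊢
  linarith [hsumb, hlastb, htel, this]
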